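/- arXiv:1701.00679 — 4 statements merged into one kernel-verified Lean document; each statement's English description precedes it below -/
import Mathlib

section
/- Let T be a finite family of pairwise disjoint non-vertical triangles in ℝ³ with edge set E, let Δ be a nonempty open convex subset of ℝ² containing no vertical projection of a vertex of any triangle of T, let C_Δ = Δ × ℝ, and let T_Δ = { T ∩ C_Δ : T ∈ T, T ∩ C_Δ ≠ ∅ }. Let P_0 ≺ P_1 ≺ … ≺ P_{k−1} ≺ P_0 (indices mod k, k ≥ 3, the P_i distinct) be a minimal cycle in T_Δ, i.e., no proper nonempty subfamily of {P_0, …, P_{k−1}} carries a cycle of the relation ≺. Then there exists a witness curve for this cycle all of whose links are good: there are points a_i, b_i ∈ P_i (indices mod k) such that π(b_i) = π(a_{i+1}), the z-coordinate of b_i is strictly smaller than that of a_{i+1}, and for each i the two points a_i and b_i lie on a common set e ∩ C_Δ where e ∈ E is an edge of the triangle of T whose piece is P_i. -/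
noncomputable section

/-- Points of `ℝ³`, modeled as `ℝ × ℝ × ℝ`. -/
abbrev R3 : Type := ℝ × ℝ × ℝ

/-- Points of `ℝ²`, modeled as `ℝ × ℝ`. -/
abbrev R2 : Type := ℝ × ℝ

/-- The vertical projection `π : ℝ³ → ℝ²`, `(x,y,z) ↦ (x,y)`. -/
def vproj (p : R3) : R2 := (p.1, p.2.1)

/-- The `z`-coordinate of a point of `ℝ³`. -/
def zcoord (p : R3) : ℝ := p.2.2

/-- `Below A B` (`A ≺ B`): there are `p ∈ A`, `q ∈ B` on a common vertical line
with the `z`-coordinate of `p` strictly smaller than that of `q`. -/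
def Below (A B : Set R3) : Prop :=
  ∃ p ∈ A, ∃ q ∈ B, vproj p = vproj q ∧ zcoord p < zcoord q

/-- A (finite) family of sets admits a depth order: it can be enumerated so that
`S_i ≺ S_j` implies `i < j`; equivalently, there is a rank function which is strictly
monotone along the `Below` relation. -/
def HasDepthOrder (F : Set (Set R3)) : Prop :=
  ∃ f : Set R3 → ℕ, ∀ A ∈ F, ∀ B ∈ F, Below A B → f A < f B

/-- A set is non-vertical if no two of its points lie on a common vertical line. -/
def NonVertical (S : Set R3) : Prop :=
  ∀ p ∈ S, ∀ q ∈ S, vproj p = vproj q → p = q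

/-- The triangle spanned by a triple of vertices. -/
def triOf (t : R3 × R3 × R3) : Set R3 := convexHull ℝ {t.1, t.2.1, t.2.2}

/-- The vertex set of a triangle given by a triple of vertices. -/
def vertsOf (t : R3 × R3 × R3) : Set R3 := {t.1, t.2.1, t.2.2}

/-- The edges of a triangle: the closed segments joining pairs of its vertices. -/
def edgesOf (t : R3 × R3 × R3) : Set (Set R3) :=
  {segment ℝ t.1 t.2.1, segment ℝ t.1 t.2.2, segment ℝ t.2.1 t.2.2}

/-- The three edges of a triangle, as pairs of endpoints. -/
def edgePairsOf (t : R3 × R3 × R3) : Set (R3 × R3) :=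
  {(t.1, t.2.1), (t.1, t.2.2), (t.2.1, t.2.2)}

/-- A triple of points are the vertices of a genuine triangle when they are
affinely independent. -/
def IsTriangleVerts (t : R3 × R3 × R3) : Prop :=
  AffineIndependent ℝ ![t.1, t.2.1, t.2.2]

/-- A set is a triangle if it is the convex hull of three affinely independent points. -/
def IsTriangle (S : Set R3) : Prop :=
  ∃ a b c : R3, AffineIndependent ℝ ![a, b, c] ∧ S = convexHull ℝ {a, b, c}

/-- The closed segment with the given pair of endpoints. -/
def segOf (e : R3 × R3) : Set R3 := segment ℝ e.1 e.2

/-- The line through `ℓ.1` with direction `ℓ.2`. -/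
def lineOf (ℓ : R3 × R3) : Set R3 := {p : R3 | ∃ c : ℝ, p = ℓ.1 + c • ℓ.2}

/-- The fragments obtained by cutting the set `S` at the points of `X`:
the connected components of `S \ X`. -/
def cutFragments (S : Set R3) (X : Set R3) : Set (Set R3) :=
  {F | ∃ p ∈ S \ X, F = connectedComponentIn (S \ X) p}

/-- A cycle of the relation `Below` inside a family `W`: a sequence
`w_1 ≺ w_2 ≺ … ≺ w_m ≺ w_1` with `m ≥ 1` and all members in `W`. -/
def BelowCycle (W : Set (Set R3)) : Prop :=
  ∃ m : ℕ, 1 ≤ m ∧ ∃ w : ZMod m → Set R3,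
    (∀ i, w i ∈ W) ∧ ∀ i, Below (w i) (w (i + 1))

/-!
Everything is projected vertically. By minimality, `P i ≺ P j` holds only for `j = i + 1`, so over
`Δ` the projected triangles `K i`, `K j` of non-consecutive pieces are disjoint, and no point lies
in three consecutive ones (it would give `P (m - 1) ≺ P (m + 1)`). Let `x m ∈ Δ` project a witness
of `P m ≺ P (m + 1)`. The segment from `x (m - 2)` to `x (m - 1)` enters `K m` through an edge
`e m`; as `Δ` is convex and contains no vertex, the line of `e m` meets `Δ` only inside `e m`.
Hence the links `x (m - n)`, `2 ≤ n < k`, all lie strictly on the outer side of `e m`, and a sign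
argument yields a point of `e m ∩ e (m + 1)` over `Δ`. Lifting these points to the edges of the
triangles gives `b m` and `a (m + 1)` on a common vertical line, and `b m` lies below `a (m + 1)`
because two disjoint convex sets cannot each lie below the other.
-/

open Set AffineMap

section AffineFunctional

variable {E : Type*} [AddCommGroup E] [Module ℝ E]

theorem AffineMap.exists_mem_segment_eq_zero (f : E →ᵃ[ℝ] ℝ) {a b : E} (ha : f a ≤ 0)
    (hb : 0 ≤ f b) : ∃ z ∈ segment ℝ a b, f z = 0 := by
  show (0 : ℝ) ∈ f '' segment ℝ a b
  rw [image_segment, segment_eq_uIcc]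
  exact mem_uIcc.2 (Or.inl ⟨ha, hb⟩)

theorem AffineMap.eq_zero_of_mem_segment (f : E →ᵃ[ℝ] ℝ) {a b z : E} (ha : f a = 0)
    (hb : f b = 0) (hz : z ∈ segment ℝ a b) : f z = 0 := by
  have := mem_image_of_mem f hz
  rwa [image_segment, ha, hb, segment_same, mem_singleton_iff] at this

theorem Convex.lineMap_mem_segment {Δ : Set E} (hΔ : Convex ℝ Δ) {x y p : E} {s : ℝ}
    (hx : x ∉ Δ) (hy : y ∉ Δ) (hp : p ∈ segment ℝ x y) (hpΔ : p ∈ Δ)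
    (hs : lineMap x y s ∈ Δ) : lineMap x y s ∈ segment ℝ x y := by
  rw [segment_eq_image_lineMap] at hp ⊢
  obtain ⟨r, hr, rfl⟩ := hp
  have hmem : ∀ c ∈ uIcc r s, lineMap x y c ∈ Δ := fun c hc =>
    hΔ.segment_subset hpΔ hs <| by
      rw [← image_segment, segment_eq_uIcc]; exact mem_image_of_mem _ hc
  refine mem_image_of_mem _ ⟨not_lt.1 fun hs0 => hx ?_, not_lt.1 fun hs1 => hy ?_⟩
  · simpa using hmem 0 (mem_uIcc.2 (Or.inr ⟨hs0.le, hr.1⟩))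
  · simpa using hmem 1 (mem_uIcc.2 (Or.inl ⟨hr.2, hs1.le⟩))

/-- The first point of the segment satisfying all constraints `0 ≤ f j` is reached at the largest
of the zeros `τ i` of the constraints violated at `y₀`. -/
theorem exists_mem_segment_tight {ι : Type*} [Finite ι] (f : ι → E →ᵃ[ℝ] ℝ) {y₀ y₁ : E}
    (h₀ : ∃ i, f i y₀ < 0) (h₁ : ∀ i, 0 ≤ f i y₁) :
    ∃ i, f i y₀ < 0 ∧ ∃ p ∈ segment ℝ y₀ y₁, (∀ j, 0 ≤ f j p) ∧ f i p = 0 := by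
  have hf : ∀ i τ, f i (lineMap y₀ y₁ τ) = f i y₀ + τ * (f i y₁ - f i y₀) := fun i τ => by
    rw [apply_lineMap, lineMap_apply_ring']; ring
  set τ : ι → ℝ := fun i => f i y₀ / (f i y₀ - f i y₁)
  have hτ : ∀ i, f i y₀ < 0 → f i y₀ + τ i * (f i y₁ - f i y₀) = 0 := fun i hi => by
    have : f i y₀ - f i y₁ ≠ 0 := by linarith [h₁ i]
    simp only [τ]; field_simp; ring
  obtain ⟨i, hi, hmax⟩ := (Set.toFinite {i | f i y₀ < 0}).exists_maximalFor τ _ h₀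
  have hmax' : ∀ j, f j y₀ < 0 → τ j ≤ τ i := fun j hj =>
    (le_total (τ j) (τ i)).elim id (hmax hj)
  have hden : f i y₀ - f i y₁ < 0 := by linarith [h₁ i, show f i y₀ < 0 from hi]
  have hτ0 : 0 ≤ τ i := div_nonneg_of_nonpos (le_of_lt hi) hden.le
  have hτ1 : τ i ≤ 1 := (div_le_one_of_neg hden).2 (by linarith [h₁ i])
  refine ⟨i, hi, lineMap y₀ y₁ (τ i), ?_, fun j => ?_, by rw [hf]; exact hτ i hi⟩
  · rw [segment_eq_image_lineMap]; exact mem_image_of_mem _ ⟨hτ0, hτ1⟩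
  · rw [hf]
    by_cases hj : f j y₀ < 0
    · have := hτ j hj
      nlinarith [hmax' j hj, h₁ j]
    · nlinarith [h₁ j]

end AffineFunctional

section Triangle

variable {E F : Type*} [AddCommGroup E] [Module ℝ E] [AddCommGroup F] [Module ℝ F]

def oppEdge (v : Fin 3 → E) (i : Fin 3) : Set E := segment ℝ (v (i + 1)) (v (i + 2))

theorem image_oppEdge (f : E →ᵃ[ℝ] F) (v : Fin 3 → E) (i : Fin 3) :
    f '' oppEdge v i = oppEdge (f ∘ v) i :=
  image_segment _ f _ _

theorem oppEdge_subset_convexHull (v : Fin 3 → E) (i : Fin 3) :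
    oppEdge v i ⊆ convexHull ℝ (range v) :=
  (convex_convexHull ℝ _).segment_subset (subset_convexHull ℝ _ (mem_range_self _))
    (subset_convexHull ℝ _ (mem_range_self _))

namespace AffineBasis

variable (b : AffineBasis (Fin 3) ℝ E)

theorem coord_add_coord_add_coord (i : Fin 3) (z : E) :
    b.coord i z + b.coord (i + 1) z + b.coord (i + 2) z = 1 := by
  have h := b.sum_coord_apply_eq_one z
  rw [Fin.sum_univ_three] at h
  fin_cases i <;> simp <;> linarith

theorem coord_smul_add_coord_smul_add_coord_smul (i : Fin 3) (z : E) :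
    b.coord i z • b i + b.coord (i + 1) z • b (i + 1) + b.coord (i + 2) z • b (i + 2) = z := by
  have h := b.linear_combination_coord_eq_self z
  rw [Fin.sum_univ_three] at h
  fin_cases i <;> simp <;> (conv_rhs => rw [← h]) <;> abel

theorem lineMap_coord_eq_self {i : Fin 3} {z : E} (hz : b.coord i z = 0) :
    lineMap (b (i + 1)) (b (i + 2)) (b.coord (i + 2) z) = z := by
  have h1 := b.coord_add_coord_add_coord i z
  have h2 := b.coord_smul_add_coord_smul_add_coord_smul i z
  rw [hz, zero_smul, zero_add] at h2
  rw [lineMap_apply_module, show 1 - b.coord (i + 2) z = b.coord (i + 1) z by linarith]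
  exact h2

theorem coord_nonneg {z : E} (hz : z ∈ convexHull ℝ (range b)) (i : Fin 3) :
    0 ≤ b.coord i z := by
  rw [b.convexHull_eq_nonneg_coord] at hz
  exact hz i

theorem coord_eq_zero_of_mem_oppEdge {i : Fin 3} {z : E} (hz : z ∈ oppEdge b i) :
    b.coord i z = 0 :=
  (b.coord i).eq_zero_of_mem_segment (b.coord_apply_ne (by fin_cases i <;> decide))
    (b.coord_apply_ne (by fin_cases i <;> decide)) hz

theorem mem_oppEdge_of_coord_eq_zero {i : Fin 3} {z : E} (hz : z ∈ convexHull ℝ (range b))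
    (hi : b.coord i z = 0) : z ∈ oppEdge b i := by
  rw [oppEdge, segment_eq_image_lineMap, ← b.lineMap_coord_eq_self hi]
  refine mem_image_of_mem _ ⟨b.coord_nonneg hz _, ?_⟩
  linarith [b.coord_add_coord_add_coord i z, b.coord_nonneg hz (i + 1)]

theorem mem_oppEdge_of_convex {Δ : Set E} (hΔ : Convex ℝ Δ) (hv : ∀ j, b j ∉ Δ) {i : Fin 3}
    {p z : E} (hp : p ∈ oppEdge b i) (hpΔ : p ∈ Δ) (hzΔ : z ∈ Δ) (hz : b.coord i z = 0) :
    z ∈ oppEdge b i := by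
  rw [← b.lineMap_coord_eq_self hz] at hzΔ ⊢
  exact hΔ.lineMap_mem_segment (hv _) (hv _) hp hpΔ hzΔ

theorem exists_mem_segment_mem_oppEdge {y₀ y₁ : E} (h₀ : y₀ ∉ convexHull ℝ (range b))
    (h₁ : y₁ ∈ convexHull ℝ (range b)) :
    ∃ i, b.coord i y₀ < 0 ∧ ∃ p ∈ segment ℝ y₀ y₁, p ∈ oppEdge b i := by
  rw [b.convexHull_eq_nonneg_coord] at h₀ h₁
  simp only [mem_ofPred_eq, not_forall, not_le] at h₀
  obtain ⟨i, hi, p, hp, hpK, hpi⟩ := exists_mem_segment_tight b.coord h₀ h₁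
  refine ⟨i, hi, p, hp, b.mem_oppEdge_of_coord_eq_zero ?_ hpi⟩
  rw [b.convexHull_eq_nonneg_coord]
  exact hpK

end AffineBasis

end Triangle

theorem ZMod.natCast_ne_natCast {k a b : ℕ} (ha : a < k) (hb : b < k) (hab : a ≠ b) :
    (a : ZMod k) ≠ b := by
  rwa [Ne, ZMod.natCast_eq_natCast_iff', Nat.mod_eq_of_lt ha, Nat.mod_eq_of_lt hb]

theorem ZMod.sub_natCast_pred {k : ℕ} (hk : 1 ≤ k) (m : ZMod k) :
    m - ((k - 1 : ℕ) : ZMod k) = m + 1 := by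
  rw [Nat.cast_sub hk, ZMod.natCast_self]; ring

theorem ZMod.ne_add_one {k : ℕ} (hk : 2 ≤ k) (m : ZMod k) : m ≠ m + 1 := fun h =>
  ZMod.natCast_ne_natCast (k := k) (a := 1) (b := 0) (by omega) (by omega) (by omega)
    (by simpa using h)

section PlanarCycle

variable {E : Type*} [AddCommGroup E] [Module ℝ E] {k : ℕ}

/-- The vertical projection of a minimal cycle `P 0 ≺ P 1 ≺ ⋯ ≺ P (k - 1) ≺ P 0` of triangle
pieces over a convex region `Δ`: `K m` spans the projection of the triangle carrying `P m`, and
`x m` is the projection of a witness of `P m ≺ P (m + 1)`. -/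
structure IsCycleShadow (Δ : Set E) (K : ZMod k → AffineBasis (Fin 3) ℝ E) (x : ZMod k → E) :
    Prop where
  convex : Convex ℝ Δ
  vertex_notMem : ∀ m i, K m i ∉ Δ
  link_mem : ∀ m, x m ∈ Δ
  link_mem_convexHull : ∀ m, x m ∈ convexHull ℝ (range (K m))
  link_mem_convexHull_succ : ∀ m, x m ∈ convexHull ℝ (range (K (m + 1)))
  notMem_of_not_adjacent : ∀ i j, j ≠ i - 1 → j ≠ i → j ≠ i + 1 → ∀ z ∈ Δ,
    z ∈ convexHull ℝ (range (K i)) → z ∉ convexHull ℝ (range (K j))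
  notMem_of_three : ∀ j, ∀ z ∈ Δ, z ∈ convexHull ℝ (range (K (j - 1))) →
    z ∈ convexHull ℝ (range (K j)) → z ∉ convexHull ℝ (range (K (j + 1)))

/-- `e m` is an edge through which the segment from `x (m - 2)` to `x (m - 1)` enters `K m`. -/
def IsEntryEdge (K : ZMod k → AffineBasis (Fin 3) ℝ E) (x : ZMod k → E) (e : ZMod k → Fin 3) :
    Prop :=
  ∀ m, (K m).coord (e m) (x (m - 2)) < 0 ∧
    ∃ p ∈ segment ℝ (x (m - 2)) (x (m - 1)), p ∈ oppEdge (K m) (e m)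

namespace IsCycleShadow

variable {Δ : Set E} {K : ZMod k → AffineBasis (Fin 3) ℝ E} {x : ZMod k → E}
  (h : IsCycleShadow Δ K x)
include h

theorem link_pred_mem_convexHull (m : ZMod k) : x (m - 1) ∈ convexHull ℝ (range (K m)) := by
  simpa using h.link_mem_convexHull_succ (m - 1)

theorem segment_subset_convexHull (m : ZMod k) :
    segment ℝ (x (m - 1)) (x m) ⊆ convexHull ℝ (range (K m)) :=
  (convex_convexHull ℝ _).segment_subset (h.link_pred_mem_convexHull m) (h.link_mem_convexHull m)

theorem segment_subset {m n : ZMod k} : segment ℝ (x m) (x n) ⊆ Δ :=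
  h.convex.segment_subset (h.link_mem m) (h.link_mem n)

theorem exists_isEntryEdge : ∃ e, IsEntryEdge K x e := by
  have hout : ∀ m, x (m - 2) ∉ convexHull ℝ (range (K m)) := fun m => by
    have hnot := h.notMem_of_three (m - 1) (x (m - 2)) (h.link_mem _)
    have hsucc := h.link_mem_convexHull_succ (m - 2)
    rw [show m - 1 - 1 = m - 2 by ring, sub_add_cancel] at hnot
    rw [show m - 2 + 1 = m - 1 by ring] at hsucc
    exact hnot (h.link_mem_convexHull _) hsucc
  choose e he using fun m => (K m).exists_mem_segment_mem_oppEdge (hout m)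
    (h.link_pred_mem_convexHull m)
  exact ⟨e, he⟩

section EntryEdge

variable {e : ZMod k → Fin 3} (he : IsEntryEdge K x e)
include he

theorem mem_oppEdge_of_coord_eq_zero {m : ZMod k} {z : E} (hz : z ∈ Δ)
    (h0 : (K m).coord (e m) z = 0) : z ∈ oppEdge (K m) (e m) := by
  obtain ⟨p, hp, hpe⟩ := (he m).2
  exact (K m).mem_oppEdge_of_convex h.convex (h.vertex_notMem m) hpe (h.segment_subset hp) hz h0

/-- A sign change between `x (m - n)` and `x (m - n - 1)` would put a point of the entry edge of
`K m` into the triangle `K (m - n)`, which is not adjacent to `K m`. -/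
theorem coord_link_sub_neg (m : ZMod k) :
    ∀ n : ℕ, 2 ≤ n → n < k → (K m).coord (e m) (x (m - n)) < 0 := by
  have hne : ∀ a b : ℕ, a < k → b < k → a ≠ b → m - a ≠ m - b := fun a b ha hb hab heq =>
    ZMod.natCast_ne_natCast ha hb hab (sub_right_injective heq)
  refine Nat.le_induction (fun _ => by simpa using (he m).1) fun n hn ih hnk => ?_
  by_contra hpos
  obtain ⟨z, hz, hz0⟩ := ((K m).coord (e m)).exists_mem_segment_eq_zero (ih (by omega)).le
    (not_lt.1 hpos)
  have hzΔ : z ∈ Δ := h.segment_subset hz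
  rw [segment_symm, Nat.cast_succ, ← sub_sub] at hz
  refine h.notMem_of_not_adjacent m (m - n) ?_ ?_ ?_ z hzΔ
    (oppEdge_subset_convexHull _ _ (h.mem_oppEdge_of_coord_eq_zero he hzΔ hz0))
    (h.segment_subset_convexHull _ hz)
  · simpa using hne n 1 (by omega) (by omega) (by omega)
  · simpa using hne n 0 (by omega) (by omega) (by omega)
  · simpa [ZMod.sub_natCast_pred (by omega : 1 ≤ k)] using
      hne n (k - 1) (by omega) (by omega) (by omega)

theorem coord_link_succ_neg (hk : 3 ≤ k) (m : ZMod k) : (K m).coord (e m) (x (m + 1)) < 0 := by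
  simpa [ZMod.sub_natCast_pred (by omega : 1 ≤ k)] using
    h.coord_link_sub_neg he m (k - 1) (by omega) (by omega)

/-- Along the segment from `x (m + 2)` to `x (m + 1)` the line of the entry edge of `K (m + 1)` is
crossed at `p'`. If the entry edge of `K m` separated `p'` from `x (m + 1)`, the crossing point
would lie in three consecutive triangles. Otherwise it separates `p'` from the entry point `q` of
`K (m + 1)`, and the crossing on `[p', q]` lies on both edges. -/
theorem exists_mem_oppEdge_inter (hk : 3 ≤ k) (m : ZMod k) :
    ∃ v ∈ Δ, v ∈ oppEdge (K m) (e m) ∧ v ∈ oppEdge (K (m + 1)) (e (m + 1)) := by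
  set φ := (K m).coord (e m)
  set ψ := (K (m + 1)).coord (e (m + 1))
  obtain ⟨p', hp', hψp'⟩ := ψ.exists_mem_segment_eq_zero
    (h.coord_link_succ_neg he hk (m + 1)).le ((K (m + 1)).coord_nonneg (h.link_mem_convexHull _) _)
  have hp'Δ : p' ∈ Δ := h.segment_subset hp'
  have hp'e : p' ∈ oppEdge (K (m + 1)) (e (m + 1)) := h.mem_oppEdge_of_coord_eq_zero he hp'Δ hψp'
  obtain ⟨q, hq, hqe⟩ := (he (m + 1)).2
  rw [show m + 1 - 2 = m - 1 by ring, add_sub_cancel_right] at hq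
  have hqΔ : q ∈ Δ := h.segment_subset hq
  by_cases hφp' : φ p' ≤ 0
  · obtain ⟨z, hz, hφz⟩ := φ.exists_mem_segment_eq_zero hφp'
      ((K m).coord_nonneg (h.segment_subset_convexHull m hq) _)
    have hzΔ : z ∈ Δ := h.convex.segment_subset hp'Δ hqΔ hz
    have hψz : ψ z = 0 :=
      ψ.eq_zero_of_mem_segment hψp' ((K (m + 1)).coord_eq_zero_of_mem_oppEdge hqe) hz
    exact ⟨z, hzΔ, h.mem_oppEdge_of_coord_eq_zero he hzΔ hφz,
      h.mem_oppEdge_of_coord_eq_zero he hzΔ hψz⟩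
  · exfalso
    obtain ⟨w, hw, hφw⟩ := φ.exists_mem_segment_eq_zero (h.coord_link_succ_neg he hk m).le
      (not_le.1 hφp').le
    have hwΔ : w ∈ Δ := h.convex.segment_subset (h.link_mem _) hp'Δ hw
    have hw₀ : w ∈ convexHull ℝ (range (K m)) :=
      oppEdge_subset_convexHull _ _ (h.mem_oppEdge_of_coord_eq_zero he hwΔ hφw)
    have hw₁ : w ∈ convexHull ℝ (range (K (m + 1))) :=
      (convex_convexHull ℝ _).segment_subset (h.link_mem_convexHull _)
        (oppEdge_subset_convexHull _ _ hp'e) hw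
    have hw₂ : w ∈ convexHull ℝ (range (K (m + 1 + 1))) :=
      (convex_convexHull ℝ _).segment_subset (h.link_mem_convexHull_succ _)
        ((convex_convexHull ℝ _).segment_subset (h.link_mem_convexHull _)
          (h.link_mem_convexHull_succ _) hp') hw
    exact h.notMem_of_three (m + 1) w hwΔ (by rwa [add_sub_cancel_right]) hw₁ hw₂

end EntryEdge

theorem exists_oppEdge_links (hk : 3 ≤ k) : ∃ (e : ZMod k → Fin 3) (v : ZMod k → E), ∀ m,
    v m ∈ Δ ∧ v m ∈ oppEdge (K m) (e m) ∧ v m ∈ oppEdge (K (m + 1)) (e (m + 1)) := by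
  obtain ⟨e, he⟩ := h.exists_isEntryEdge
  choose v hv using h.exists_mem_oppEdge_inter he hk
  exact ⟨e, v, hv⟩

end IsCycleShadow

end PlanarCycle

def vprojLinear : R3 →ₗ[ℝ] R2 :=
  (LinearMap.fst ℝ ℝ (ℝ × ℝ)).prod ((LinearMap.fst ℝ ℝ ℝ).comp (LinearMap.snd ℝ ℝ (ℝ × ℝ)))

theorem coe_vprojLinear : ⇑vprojLinear = vproj := rfl

theorem eq_of_vproj_eq_of_zcoord_eq {p q : R3} (h₁ : vproj p = vproj q)
    (h₂ : zcoord p = zcoord q) : p = q := by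
  simp only [vproj, zcoord, Prod.mk.injEq] at h₁ h₂
  exact Prod.ext h₁.1 (Prod.ext h₁.2 h₂)

theorem below_or_below_of_vproj_eq {A B : Set R3} {p q : R3} (hp : p ∈ A) (hq : q ∈ B)
    (h : vproj p = vproj q) : Below A B ∨ Below B A ∨ p = q := by
  rcases lt_trichotomy (zcoord p) (zcoord q) with hlt | heq | hgt
  · exact Or.inl ⟨p, hp, q, hq, h, hlt⟩
  · exact Or.inr (Or.inr (eq_of_vproj_eq_of_zcoord_eq h heq))
  · exact Or.inr (Or.inl ⟨q, hq, p, hp, h.symm, hgt⟩)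

open scoped Pointwise in
/-- Otherwise the vertical line through the origin meets the convex set `B - A` above and below
the origin, hence at the origin. -/
theorem not_below_and_below {A B : Set R3} (hA : Convex ℝ A) (hB : Convex ℝ B)
    (hAB : Disjoint A B) : ¬ (Below A B ∧ Below B A) := by
  rintro ⟨⟨p, hp, q, hq, hpq, hz⟩, ⟨q', hq', p', hp', hqp', hz'⟩⟩
  have hu : q - p ∈ B - A := Set.sub_mem_sub hq hp
  have hw : q' - p' ∈ B - A := Set.sub_mem_sub hq' hp'
  simp only [vproj, zcoord, Prod.mk.injEq] at hpq hqp' hz hz'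
  set c := (q.2.2 - p.2.2) / (q.2.2 - p.2.2 - (q'.2.2 - p'.2.2))
  have hc : c ∈ Icc (0 : ℝ) 1 :=
    ⟨div_nonneg (by linarith) (by linarith), (div_le_one (by linarith)).2 (by linarith)⟩
  have h0 : lineMap (q - p) (q' - p') c = 0 := by
    have : c * (q.2.2 - p.2.2 - (q'.2.2 - p'.2.2)) = q.2.2 - p.2.2 :=
      div_mul_cancel₀ _ (by linarith)
    ext <;> simp only [lineMap_apply_module, Prod.fst_add, Prod.snd_add, Prod.smul_fst,
      Prod.smul_snd, Prod.fst_sub, Prod.snd_sub, smul_eq_mul, Prod.fst_zero, Prod.snd_zero,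
      hpq.1, hpq.2, hqp'.1, hqp'.2, sub_self, mul_zero, add_zero]
    linear_combination -this
  have h0mem := (hB.sub hA).segment_subset hu hw
    (by rw [segment_eq_image_lineMap]; exact mem_image_of_mem _ hc)
  rw [h0] at h0mem
  obtain ⟨b, hb, a, ha, hba⟩ := h0mem
  exact Set.disjoint_left.1 hAB ha (sub_eq_zero.1 hba ▸ hb)

theorem zcoord_lt_of_below {A B : Set R3} (hA : Convex ℝ A) (hB : Convex ℝ B)
    (hAB : Disjoint A B) (h : Below A B) {p q : R3} (hp : p ∈ A) (hq : q ∈ B)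
    (hpq : vproj p = vproj q) : zcoord p < zcoord q := by
  rcases lt_trichotomy (zcoord p) (zcoord q) with hlt | heq | hgt
  · exact hlt
  · exact absurd (by rwa [eq_of_vproj_eq_of_zcoord_eq hpq heq]) (Set.disjoint_left.1 hAB hp)
  · exact absurd ⟨h, q, hq, p, hp, hpq.symm, hgt⟩ (not_below_and_below hA hB hAB)

theorem belowCycle_image_Iic {f : ℕ → Set R3} {n : ℕ}
    (hchain : ∀ s < n, Below (f s) (f (s + 1))) (hclose : Below (f n) (f 0)) :
    BelowCycle (f '' Iic n) := by
  have hstep : ∀ s : Fin (n + 1), Below (f s) (f ↑(s + 1)) := fun s => by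
    rw [Fin.val_add_one]
    split_ifs with hs
    · subst hs; exact hclose
    · exact hchain s (Fin.val_lt_last hs)
  exact ⟨n + 1, by omega, fun s => f s.val,
    fun s => mem_image_of_mem f (Nat.lt_succ_iff.1 (ZMod.val_lt s)), hstep⟩

/-- Otherwise `P j ≺ P (j + 1) ≺ ⋯ ≺ P i ≺ P j` is a cycle avoiding `P (i + 1)`. -/
theorem eq_add_one_of_below {k : ℕ} [NeZero k] {P : ZMod k → Set R3} (hPinj : Function.Injective P)
    (hcyc : ∀ i, Below (P i) (P (i + 1)))
    (hmin : ∀ W : Set (Set R3), W.Nonempty → W ⊂ range P → ¬ BelowCycle W) {i j : ZMod k}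
    (h : Below (P i) (P j)) : j = i + 1 := by
  by_contra hne
  set n := (i - j).val
  have hcycle : BelowCycle ((fun s : ℕ => P (j + s)) '' Iic n) :=
    belowCycle_image_Iic (fun s _ => by simpa [add_assoc] using hcyc (j + s))
      (by simpa [n] using h)
  refine hmin _ (Nonempty.image _ nonempty_Iic) ⟨image_subset_iff.2 fun s _ => mem_range_self _,
    fun hsub => ?_⟩ hcycle
  obtain ⟨s, hs, hPs⟩ := hsub (mem_range_self (i + 1))
  have hjs : j + s = i + 1 := hPinj hPs
  have hsn : ((s : ℕ) : ZMod k) = ((n + 1 : ℕ) : ZMod k) := by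
    push_cast; rw [ZMod.natCast_zmod_val]; linear_combination hjs
  rw [mem_Iic] at hs
  rcases Nat.lt_or_ge (n + 1) k with hlt | hge
  · exact ZMod.natCast_ne_natCast (by omega) hlt (by omega) hsn
  · rw [show n + 1 = k by have := ZMod.val_lt (i - j); omega, ZMod.natCast_self] at hsn
    exact hne (by linear_combination hjs - hsn)

theorem Wbtw.of_map_of_injOn {E F : Type*} [AddCommGroup E] [Module ℝ E] [AddCommGroup F]
    [Module ℝ F] {f : E →ᵃ[ℝ] F} {S : Set E} (hS : Convex ℝ S) (hf : InjOn f S) {x y z : E}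
    (hx : x ∈ S) (hy : y ∈ S) (hz : z ∈ S) (h : Wbtw ℝ (f x) (f y) (f z)) : Wbtw ℝ x y z := by
  obtain ⟨c, hc, hcy⟩ := h
  exact ⟨c, hc, hf (hS.lineMap_mem hx hz hc) hy (by rw [apply_lineMap]; exact hcy)⟩

theorem AffineIndependent.map_of_injOn {E F : Type*} [AddCommGroup E] [Module ℝ E]
    [AddCommGroup F] [Module ℝ F] {f : E →ᵃ[ℝ] F} {a b c : E}
    (h : AffineIndependent ℝ ![a, b, c]) (hf : InjOn f (convexHull ℝ {a, b, c})) :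
    AffineIndependent ℝ ![f a, f b, f c] := by
  rw [affineIndependent_iff_not_collinear_set] at h ⊢
  have hS := convex_convexHull ℝ ({a, b, c} : Set E)
  have ha : a ∈ convexHull ℝ {a, b, c} := subset_convexHull ℝ _ (by simp)
  have hb : b ∈ convexHull ℝ {a, b, c} := subset_convexHull ℝ _ (by simp)
  have hc : c ∈ convexHull ℝ {a, b, c} := subset_convexHull ℝ _ (by simp)
  have hrot : ∀ x y z : E, ({x, y, z} : Set E) = {y, z, x} := fun x y z => by
    ext; simp only [mem_insert_iff, mem_singleton_iff]; tauto
  intro hcol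
  rcases hcol.wbtw_or_wbtw_or_wbtw with h' | h' | h'
  · exact h (h'.of_map_of_injOn hS hf ha hb hc).collinear
  · exact h (hrot a b c ▸ (h'.of_map_of_injOn hS hf hb hc ha).collinear)
  · exact h (hrot c a b ▸ (h'.of_map_of_injOn hS hf hc ha hb).collinear)

def triVertex (t : R3 × R3 × R3) : Fin 3 → R3 := ![t.1, t.2.1, t.2.2]

theorem triOf_eq_convexHull (t : R3 × R3 × R3) : triOf t = convexHull ℝ (range (triVertex t)) := by
  rw [triOf]
  congr 1
  ext
  simp [triVertex]
  tauto

theorem image_vproj_triOf (t : R3 × R3 × R3) :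
    vproj '' triOf t = convexHull ℝ (range (vproj ∘ triVertex t)) := by
  rw [triOf_eq_convexHull, ← coe_vprojLinear, vprojLinear.image_convexHull, range_comp]

theorem oppEdge_mem_edgesOf (t : R3 × R3 × R3) (i : Fin 3) :
    oppEdge (triVertex t) i ∈ edgesOf t := by
  fin_cases i <;> simp [oppEdge, triVertex, edgesOf, segment_symm]

theorem oppEdge_subset_triOf (t : R3 × R3 × R3) (i : Fin 3) : oppEdge (triVertex t) i ⊆ triOf t :=
  triOf_eq_convexHull t ▸ oppEdge_subset_convexHull _ _

theorem image_vproj_oppEdge (t : R3 × R3 × R3) (i : Fin 3) :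
    vproj '' oppEdge (triVertex t) i = oppEdge (vproj ∘ triVertex t) i :=
  image_oppEdge vprojLinear.toAffineMap _ i

theorem exists_affineBasis_vproj {t : R3 × R3 × R3} (htri : IsTriangleVerts t)
    (hnv : NonVertical (triOf t)) : ∃ b : AffineBasis (Fin 3) ℝ R2, ⇑b = vproj ∘ triVertex t := by
  have hind : AffineIndependent ℝ (vproj ∘ triVertex t) := by
    have := htri.map_of_injOn (f := vprojLinear.toAffineMap) fun p hp q hq => hnv p hp q hq
    have heq : vproj ∘ triVertex t = ![vprojLinear.toAffineMap t.1,
        vprojLinear.toAffineMap t.2.1, vprojLinear.toAffineMap t.2.2] := by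
      funext i; fin_cases i <;> rfl
    rw [heq]
    exact this
  refine ⟨⟨_, hind, ?_⟩, rfl⟩
  rw [hind.affineSpan_eq_top_iff_card_eq_finrank_add_one]
  simp

theorem isCycleShadow_of_pieces {k : ℕ} (hk : 2 ≤ k) {Δ : Set R2} (hΔ : Convex ℝ Δ)
    {t : ZMod k → R3 × R3 × R3} {K : ZMod k → AffineBasis (Fin 3) ℝ R2}
    (hK : ∀ m, ⇑(K m) = vproj ∘ triVertex (t m)) (hvert : ∀ m i, vproj (triVertex (t m) i) ∉ Δ)
    {P : ZMod k → Set R3} (hP : ∀ m, P m = triOf (t m) ∩ {p | vproj p ∈ Δ})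
    (hconv : ∀ m, Convex ℝ (P m)) (hdisj : ∀ i j, i ≠ j → Disjoint (P i) (P j))
    (hcyc : ∀ m, Below (P m) (P (m + 1))) (hnext : ∀ i j, Below (P i) (P j) → j = i + 1) :
    ∃ x, IsCycleShadow Δ K x := by
  have hproj : ∀ m, ∀ p ∈ P m, vproj p ∈ Δ ∧ vproj p ∈ convexHull ℝ (range (K m)) :=
    fun m p hp => by
      rw [hP m] at hp
      rw [hK, ← image_vproj_triOf]
      exact ⟨hp.2, mem_image_of_mem _ hp.1⟩
  have hlift : ∀ m, ∀ z ∈ Δ, z ∈ convexHull ℝ (range (K m)) → ∃ p ∈ P m, vproj p = z :=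
    fun m z hz hzK => by
      rw [hK, ← image_vproj_triOf] at hzK
      obtain ⟨p, hp, rfl⟩ := hzK
      exact ⟨p, hP m ▸ ⟨hp, hz⟩, rfl⟩
  choose p hp q hq hpq _ using fun m => hcyc m
  refine ⟨fun m => vproj (p m), hΔ, fun m i => by rw [hK]; exact hvert m i,
    fun m => (hproj m _ (hp m)).1, fun m => (hproj m _ (hp m)).2,
    fun m => hpq m ▸ (hproj _ _ (hq m)).2, ?_, ?_⟩
  · intro i j hj₁ hj₂ hj₃ z hz hzi hzj
    obtain ⟨a, ha, rfl⟩ := hlift i z hz hzi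
    obtain ⟨b, hb, hab⟩ := hlift j _ hz hzj
    rcases below_or_below_of_vproj_eq ha hb hab.symm with h | h | rfl
    · exact hj₃ (hnext i j h)
    · exact hj₁ (by rw [hnext j i h, add_sub_cancel_right])
    · exact Set.disjoint_left.1 (hdisj i j (Ne.symm hj₂)) ha hb
  · intro j z hz hz₁ hz₂ hz₃
    obtain ⟨a, ha, rfl⟩ := hlift _ z hz hz₁
    obtain ⟨b, hb, hab⟩ := hlift _ _ hz hz₂
    obtain ⟨c, hc, hac⟩ := hlift _ _ hz hz₃
    have hab' : zcoord a < zcoord b := by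
      have hb' : b ∈ P (j - 1 + 1) := by rwa [sub_add_cancel]
      exact zcoord_lt_of_below (hconv _) (hconv _) (hdisj _ _ (ZMod.ne_add_one hk _))
        (hcyc _) ha hb' hab.symm
    have hbc : zcoord b < zcoord c := zcoord_lt_of_below (hconv _) (hconv _)
      (hdisj _ _ (ZMod.ne_add_one hk j)) (hcyc j) hb hc (hab.trans hac.symm)
    have := hnext _ _ ⟨a, ha, c, hc, hac.symm, hab'.trans hbc⟩
    exact ZMod.ne_add_one hk j (by rw [sub_add_cancel] at this; exact this.symm)

theorem stmt_1_general
    (T : Finset (R3 × R3 × R3))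
    (hTri : ∀ t ∈ T, IsTriangleVerts t)
    (hNV : ∀ t ∈ T, NonVertical (triOf t))
    (hDisj : ∀ t ∈ T, ∀ t' ∈ T, t ≠ t' → Disjoint (triOf t) (triOf t'))
    (Δ : Set R2) (hΔconv : Convex ℝ Δ)
    (hvert : ∀ t ∈ T, ∀ v ∈ vertsOf t, vproj v ∉ Δ)
    (C : Set R3) (hC : C = {p : R3 | vproj p ∈ Δ})
    (TΔ : Set (Set R3))
    (hTΔ : TΔ = {S | ∃ t ∈ T, (triOf t ∩ C).Nonempty ∧ S = triOf t ∩ C})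
    (k : ℕ) (hk : 3 ≤ k)
    (P : ZMod k → Set R3) (hPinj : Function.Injective P)
    (hPmem : ∀ i, P i ∈ TΔ)
    (hPcyc : ∀ i, Below (P i) (P (i + 1)))
    (hmin : ∀ W : Set (Set R3), W.Nonempty → W ⊂ Set.range P → ¬ BelowCycle W) :
    ∃ a b : ZMod k → R3,
      (∀ i, a i ∈ P i ∧ b i ∈ P i) ∧
      (∀ i, vproj (b i) = vproj (a (i + 1)) ∧ zcoord (b i) < zcoord (a (i + 1))) ∧
      (∀ i, ∃ t ∈ T, P i = triOf t ∩ C ∧ ∃ e ∈ edgesOf t, a i ∈ e ∩ C ∧ b i ∈ e ∩ C) := by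
  subst hC hTΔ
  have : NeZero k := ⟨by omega⟩
  choose t htT _ hPt using hPmem
  have hdisj : ∀ i j, i ≠ j → Disjoint (P i) (P j) := fun i j hij => by
    rw [hPt i, hPt j]
    exact (hDisj _ (htT i) _ (htT j) fun h => hPinj.ne hij (by rw [hPt i, hPt j, h])).mono
      inter_subset_left inter_subset_left
  have hconv : ∀ i, Convex ℝ (P i) := fun i =>
    hPt i ▸ (convex_convexHull ℝ _).inter (hΔconv.linear_preimage vprojLinear)
  choose K hK using fun i => exists_affineBasis_vproj (hTri _ (htT i)) (hNV _ (htT i))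
  obtain ⟨x, hx⟩ := isCycleShadow_of_pieces (by omega) hΔconv hK
    (fun m i => hvert _ (htT m) _ (by fin_cases i <;> simp [vertsOf, triVertex])) hPt hconv
    hdisj hPcyc fun i j => eq_add_one_of_below hPinj hPcyc hmin
  obtain ⟨e, v, hv⟩ := hx.exists_oppEdge_links hk
  have hlift : ∀ m, ∀ z ∈ Δ, z ∈ oppEdge (K m) (e m) →
      ∃ p ∈ oppEdge (triVertex (t m)) (e m), p ∈ P m ∧ vproj p = z := fun m z hz hze => by
    rw [hK, ← image_vproj_oppEdge] at hze
    obtain ⟨p, hp, rfl⟩ := hze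
    exact ⟨p, hp, hPt m ▸ ⟨oppEdge_subset_triOf _ _ hp, hz⟩, rfl⟩
  choose a hae haP ha using fun m => hlift m _ (hv (m - 1)).1 (by simpa using (hv (m - 1)).2.2)
  choose b hbe hbP hb using fun m => hlift m _ (hv m).1 (hv m).2.1
  refine ⟨a, b, fun m => ⟨haP m, hbP m⟩, fun m => ?_, fun m => ⟨t m, htT m, hPt m, _,
    oppEdge_mem_edgesOf _ _, ⟨hae m, (hPt m ▸ haP m).2⟩, ⟨hbe m, (hPt m ▸ hbP m).2⟩⟩⟩
  have hba : vproj (b m) = vproj (a (m + 1)) := by rw [hb, ha, add_sub_cancel_right]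
  exact ⟨hba, zcoord_lt_of_below (hconv _) (hconv _) (hdisj _ _ (ZMod.ne_add_one (by omega) m))
    (hPcyc m) (hbP m) (haP _) hba⟩

/-- claim in the proof of Proposition 1. A minimal cycle among the
triangle pieces in a vertical column admits a witness curve all of whose links are
good: consecutive points `a_i, b_i` on `P_i` lie on a common piece `e ∩ C_Δ` of an
edge `e` of the triangle whose piece is `P_i`. -/
theorem stmt_1
    (T : Finset (R3 × R3 × R3))
    (hTri : ∀ t ∈ T, IsTriangleVerts t)
    (hNV : ∀ t ∈ T, NonVertical (triOf t))
    (hDisj : ∀ t ∈ T, ∀ t' ∈ T, t ≠ t' → Disjoint (triOf t) (triOf t'))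
    (Δ : Set R2) (hΔne : Δ.Nonempty) (hΔopen : IsOpen Δ) (hΔconv : Convex ℝ Δ)
    (hvert : ∀ t ∈ T, ∀ v ∈ vertsOf t, vproj v ∉ Δ)
    (C : Set R3) (hC : C = {p : R3 | vproj p ∈ Δ})
    (TΔ : Set (Set R3))
    (hTΔ : TΔ = {S | ∃ t ∈ T, (triOf t ∩ C).Nonempty ∧ S = triOf t ∩ C})
    (k : ℕ) (hk : 3 ≤ k)
    (P : ZMod k → Set R3) (hPinj : Function.Injective P)
    (hPmem : ∀ i, P i ∈ TΔ)
    (hPcyc : ∀ i, Below (P i) (P (i + 1)))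
    (hmin : ∀ W : Set (Set R3), W.Nonempty → W ⊂ Set.range P → ¬ BelowCycle W) :
    ∃ a b : ZMod k → R3,
      (∀ i, a i ∈ P i ∧ b i ∈ P i) ∧
      (∀ i, vproj (b i) = vproj (a (i + 1)) ∧ zcoord (b i) < zcoord (a (i + 1))) ∧
      (∀ i, ∃ t ∈ T, P i = triOf t ∩ C ∧ ∃ e ∈ edgesOf t, a i ∈ e ∩ C ∧ b i ∈ e ∩ C) :=
  stmt_1_general T hTri hNV hDisj Δ hΔconv hvert C hC TΔ hTΔ k hk P hPinj hPmem hPcyc hmin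
end
end

section
/- Let A and B be nonempty disjoint convex sets in ℝ³ whose vertical projections π(A) and π(B) intersect. Then exactly one of A ≺ B and B ≺ A holds; moreover, if A ≺ B, then for every vertical line L meeting both sets, every point of A ∩ L has strictly smaller z-coordinate than every point of B ∩ L. -/
noncomputable section

/-- The vertical line over the point `(x₀, y₀)`. -/
def vline (x₀ y₀ : ℝ) : Set R3 := {p : R3 | p.1 = x₀ ∧ p.2.1 = y₀}

lemma below_not_both (A B : Set R3) (hconvA : Convex ℝ A) (hconvB : Convex ℝ B)
    (hdisj : Disjoint A B) (h1 : Below A B) (h2 : Below B A) : False := by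
  obtain ⟨p, hp, q, hq, hpq, hz1⟩ := h1
  obtain ⟨p', hp', q', hq', hpq', hz2⟩ := h2
  set d1 := zcoord q - zcoord p with hd1def
  set d2 := zcoord q' - zcoord p' with hd2def
  have hd1 : 0 < d1 := by simp only [hd1def]; linarith
  have hd2 : 0 < d2 := by simp only [hd2def]; linarith
  have hdsum : 0 < d1 + d2 := by linarith
  set t := d1 / (d1 + d2) with htdef
  have ht0 : 0 ≤ t := div_nonneg hd1.le hdsum.le
  have ht1 : t ≤ 1 := by rw [htdef, div_le_one hdsum]; linarith
  have ha : (1 - t) • p + t • q' ∈ A := hconvA hp hq' (by linarith) ht0 (by ring)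
  have hb : (1 - t) • q + t • p' ∈ B := hconvB hq hp' (by linarith) ht0 (by ring)
  simp only [vproj, Prod.mk.injEq] at hpq hpq'
  obtain ⟨e1, e2⟩ := hpq
  obtain ⟨e1', e2'⟩ := hpq' 
  have hzeq : (1 - t) * p.2.2 + t * q'.2.2 = (1 - t) * q.2.2 + t * p'.2.2 := by
    have ht : t * (d1 + d2) = d1 := by
      rw [htdef]; field_simp
    simp only [hd1def, hd2def, zcoord] at ht
    nlinarith [ht]
  have heq : (1 - t) • p + t • q' = (1 - t) • q + t • p' := by
    apply Prod.ext
    · simpa using by rw [e1, ← e1']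
    apply Prod.ext
    · simpa using by rw [e2, ← e2']
    · simpa using hzeq
  exact Set.disjoint_left.mp hdisj ha (heq ▸ hb)

/-- For nonempty disjoint convex sets whose vertical projections
intersect, exactly one of `A ≺ B`, `B ≺ A` holds; and if `A ≺ B`, then on every
vertical line meeting both sets, every point of `A` lies strictly below every
point of `B`. -/
theorem stmt_3
    (A B : Set R3) (hA : A.Nonempty) (hB : B.Nonempty)
    (hconvA : Convex ℝ A) (hconvB : Convex ℝ B)
    (hdisj : Disjoint A B)
    (hproj : (vproj '' A ∩ vproj '' B).Nonempty) :
    Xor' (Below A B) (Below B A) ∧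
    (Below A B → ∀ x₀ y₀ : ℝ,
      (A ∩ vline x₀ y₀).Nonempty → (B ∩ vline x₀ y₀).Nonempty →
      ∀ p ∈ A ∩ vline x₀ y₀, ∀ q ∈ B ∩ vline x₀ y₀, zcoord p < zcoord q) := by
  have key := below_not_both A B hconvA hconvB hdisj
  -- at least one of the two holds
  obtain ⟨u, ⟨p0, hp0, hup⟩, ⟨q0, hq0, huq⟩⟩ := hproj
  have hne : zcoord p0 ≠ zcoord q0 := by
    intro h
    have hv : vproj p0 = vproj q0 := hup.trans huq.symm
    simp only [vproj, Prod.mk.injEq] at hv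
    have : p0 = q0 := Prod.ext hv.1 (Prod.ext hv.2 h)
    exact Set.disjoint_left.mp hdisj hp0 (this ▸ hq0)
  have hone : Below A B ∨ Below B A := by
    rcases lt_or_gt_of_ne hne with h | h
    · exact Or.inl ⟨p0, hp0, q0, hq0, hup.trans huq.symm, h⟩
    · exact Or.inr ⟨q0, hq0, p0, hp0, huq.trans hup.symm, h⟩
  constructor
  · rcases hone with h | h
    · exact Or.inl ⟨h, fun h' => key h h'⟩
    · exact Or.inr ⟨h, fun h' => key h' h⟩
  · intro hAB x₀ y₀ _ _ p ⟨hpA, hpl⟩ q ⟨hqA, hql⟩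
    have hvpq : vproj p = vproj q := by
      simp only [vproj, hpl.1, hpl.2, hql.1, hql.2]
    by_contra hle
    push_neg at hle
    rcases eq_or_lt_of_le hle with h | h
    · have hv := hvpq
      simp only [vproj, Prod.mk.injEq] at hv
      have : q = p := Prod.ext hv.1.symm (Prod.ext hv.2.symm h)
      exact Set.disjoint_left.mp hdisj hpA (this ▸ hqA)
    · exact key hAB ⟨q, hqA, p, hpA, hvpq.symm, h⟩
end
end

section
/- Let E be a finite family of pairwise disjoint non-vertical segments in ℝ³ and let X be a complete cut set for E. Let σ ⊆ ℝ³ be a convex set. Then X ∩ σ is a complete cut set for the family E_σ = { e ∩ σ : e ∈ E, e ∩ σ ≠ ∅ }. -/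
noncomputable section

/-- `S` is a (sub)segment, possibly missing one or both endpoints: a nonempty
convex subset of a closed segment. -/
def IsSubsegment (S : Set R3) : Prop :=
  S.Nonempty ∧ Convex ℝ S ∧ ∃ a b : R3, S ⊆ segment ℝ a b

/-- `X` is a complete cut set for the family `E` of segments: the fragments
(connected components of `e \ X` for `e ∈ E`) admit a depth order. -/
def IsCompleteCutSetFor (E : Set (Set R3)) (X : Set R3) : Prop :=
  HasDepthOrder (⋃ e ∈ E, cutFragments e X)

/-- used in the proof of Corollary 3 of the paper. If `X` is a
complete cut set for a family `E` of pairwise disjoint non-vertical segments, and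
`σ` is convex, then `X ∩ σ` is a complete cut set for the clipped family
`{e ∩ σ : e ∈ E, e ∩ σ ≠ ∅}`. -/
theorem stmt_11
    (E : Set (Set R3)) (hfin : E.Finite)
    (hseg : ∀ e ∈ E, IsSubsegment e)
    (hNV : ∀ e ∈ E, NonVertical e)
    (hdisj : ∀ e ∈ E, ∀ e' ∈ E, e ≠ e' → Disjoint e e')
    (X : Set R3) (hX : X.Finite)
    (hccs : IsCompleteCutSetFor E X)
    (σ : Set R3) (hσ : Convex ℝ σ) :
    IsCompleteCutSetFor {s | ∃ e ∈ E, (e ∩ σ).Nonempty ∧ s = e ∩ σ} (X ∩ σ) := by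
  classical
  obtain ⟨f, hf⟩ := hccs
  set Fam : Set (Set R3) := ⋃ e ∈ E, cutFragments e X with hFam
  have key : ∀ S ∈ ⋃ s ∈ {s | ∃ e ∈ E, (e ∩ σ).Nonempty ∧ s = e ∩ σ},
      cutFragments s (X ∩ σ), ∃ G ∈ Fam, S ⊆ G := by
    intro S hS
    simp only [Set.mem_iUnion] at hS
    obtain ⟨s, ⟨e, he, hne, rfl⟩, hSfrag⟩ := hS
    obtain ⟨p, hp, rfl⟩ := hSfrag
    have hsub : (e ∩ σ) \ (X ∩ σ) ⊆ e \ X := by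
      rintro x ⟨⟨hxe, hxσ⟩, hxX⟩
      exact ⟨hxe, fun hx => hxX ⟨hx, hxσ⟩⟩
    refine ⟨connectedComponentIn (e \ X) p, ?_, ?_⟩
    · simp only [hFam, Set.mem_iUnion]
      exact ⟨e, he, p, hsub hp, rfl⟩
    · exact (connectedComponentIn_mono p hsub)
  refine ⟨fun S => if h : ∃ G ∈ Fam, S ⊆ G then f h.choose else 0, ?_⟩
  intro A hA B hB hAB
  obtain ⟨GA, hGA, hAG⟩ := key A hA
  obtain ⟨GB, hGB, hBG⟩ := key B hB
  have h1 : ∃ G ∈ Fam, A ⊆ G := ⟨GA, hGA, hAG⟩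
  have h2 : ∃ G ∈ Fam, B ⊆ G := ⟨GB, hGB, hBG⟩
  beta_reduce
  rw [dif_pos h1, dif_pos h2]
  obtain ⟨hG1, hA1⟩ := h1.choose_spec
  obtain ⟨hG2, hB2⟩ := h2.choose_spec
  apply hf _ hG1 _ hG2
  obtain ⟨p, hp, q, hq, hpq, hz⟩ := hAB
  exact ⟨p, hA1 hp, q, hB2 hq, hpq, hz⟩
end
end

section
/- Let L be a family of n pairwise disjoint non-vertical lines in ℝ³, and let X be the set of all points p lying on a line of L such that π(p) is an intersection point of the vertical projections of two distinct lines of L. Then the family of fragments consisting, for each ℓ ∈ L, of the connected components of ℓ ∖ X, admits a depth order, and this family has at most n² fragments. -/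
/-!
A vertical line meets each non-vertical line at most once, and if it meets two lines of the
family with distinct projections, both meeting points are cut points. So no fragment is below
another, and every enumeration is a depth order.

On a line `ℓ`, each cut point lies over a crossing of `π(ℓ)` with the projection of another line
of the family, and distinct cut points with distinct such lines, because two distinct lines in the
plane meet at most once. So `ℓ` carries at most `n - 1` cuts and at most `n` fragments, unless two
lines project onto `π(ℓ)`, in which case all of `ℓ` is cut away.
-/

noncomputable section

open Set Topology

section ComplementComponents

variable {α : Type*} [ConditionallyCompleteLinearOrder α] [TopologicalSpace α] [OrderTopology α]
  [DenselyOrdered α] [NoMinOrder α]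

lemma IsOpen.exists_lt_mem {U : Set α} (hU : IsOpen U) {x : α} (hx : x ∈ U) :
    ∃ y ∈ U, y < x := by
  obtain ⟨l, hl, hsub⟩ := exists_Ioc_subset_of_mem_nhds (hU.mem_nhds hx) (exists_lt x)
  obtain ⟨y, hly, hyx⟩ := exists_between hl
  exact ⟨y, hsub ⟨hly, hyx.le⟩, hyx⟩

variable [LocallyConnectedSpace α]

/-- A component of an open set is open, so it cannot contain its infimum; being maximal among
preconnected subsets, it cannot extend to its infimum either. -/
lemma csInf_connectedComponentIn_notMem {U : Set α} (hU : IsOpen U) {x : α} (hx : x ∈ U)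
    (hb : BddBelow (connectedComponentIn U x)) : sInf (connectedComponentIn U x) ∉ U := by
  set C := connectedComponentIn U x
  have hxC : x ∈ C := mem_connectedComponentIn hx
  intro hm
  have hinsert : insert (sInf C) C ⊆ C :=
    (isPreconnected_connectedComponentIn.subset_closure (subset_insert _ _)
      (insert_subset (csInf_mem_closure ⟨x, hxC⟩ hb) subset_closure)).subset_connectedComponentIn
      (mem_insert_of_mem _ hxC) (insert_subset hm (connectedComponentIn_subset _ _))
  obtain ⟨y, hy, hlt⟩ := hU.connectedComponentIn.exists_lt_mem (hinsert (mem_insert _ _))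
  exact (csInf_le hb hy).not_gt hlt

lemma connectedComponentIn_eq_of_lowerBounds_eq {U : Set α} (hU : IsOpen U) {x y : α}
    (hx : x ∈ U) (hy : y ∈ U)
    (h : lowerBounds (connectedComponentIn U x) = lowerBounds (connectedComponentIn U y)) :
    connectedComponentIn U x = connectedComponentIn U y := by
  wlog hxy : x ≤ y generalizing x y
  · exact (this hy hx h.symm (le_of_not_ge hxy)).symm
  obtain ⟨z, hz, hzx⟩ := hU.connectedComponentIn.exists_lt_mem (mem_connectedComponentIn hx)
  have hx_not_lb : x ∉ lowerBounds (connectedComponentIn U y) :=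
    h ▸ fun hlb => (hlb hz).not_gt hzx
  obtain ⟨w, hw, hwx⟩ : ∃ w ∈ connectedComponentIn U y, w < x := by
    simpa [mem_lowerBounds] using hx_not_lb
  have hxCy : x ∈ connectedComponentIn U y :=
    isPreconnected_connectedComponentIn.ordConnected.out hw (mem_connectedComponentIn hy)
      ⟨hwx.le, hxy⟩
  rw [connectedComponentIn_eq hxCy]

/-- Distinct components have distinct sets of lower bounds, and each such set is either empty or
`Iic t` for the infimum `t ∈ T` of the component. -/
theorem encard_connectedComponentIn_compl_le {T : Set α} (hT : IsClosed T) :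
    (connectedComponentIn Tᶜ '' Tᶜ).encard ≤ T.encard + 1 := by
  have hU : IsOpen Tᶜ := hT.isOpen_compl
  have hmaps : MapsTo lowerBounds (connectedComponentIn Tᶜ '' Tᶜ) (insert ∅ (Iic '' T)) := by
    rintro _ ⟨x, hx, rfl⟩
    by_cases hb : BddBelow (connectedComponentIn Tᶜ x)
    · refine mem_insert_of_mem _ ⟨_, not_not.1 (csInf_connectedComponentIn_notMem hU hx hb), ?_⟩
      exact (isGLB_csInf ⟨x, mem_connectedComponentIn hx⟩ hb).lowerBounds_eq.symm
    · exact Or.inl (not_nonempty_iff_eq_empty.1 hb)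
  have hinj : InjOn lowerBounds (connectedComponentIn Tᶜ '' Tᶜ) := by
    rintro _ ⟨x, hx, rfl⟩ _ ⟨y, hy, rfl⟩ h
    exact connectedComponentIn_eq_of_lowerBounds_eq hU hx hy h
  calc _ ≤ (insert ∅ (Iic '' T)).encard := encard_le_encard_of_injOn hmaps hinj
    _ ≤ (Iic '' T).encard + 1 := encard_insert_le _ _
    _ ≤ T.encard + 1 := by gcongr; exact encard_image_le _ _

end ComplementComponents

theorem Topology.IsEmbedding.image_connectedComponentIn {X Y : Type*} [TopologicalSpace X]
    [TopologicalSpace Y] {f : X → Y} (hf : IsEmbedding f) {s : Set X} {x : X} (hx : x ∈ s) :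
    f '' connectedComponentIn s x = connectedComponentIn (f '' s) (f x) := by
  refine (hf.continuous.continuousOn.image_connectedComponentIn_subset hx).antisymm ?_
  set C := connectedComponentIn (f '' s) (f x)
  have hCrange : C ⊆ range f := (connectedComponentIn_subset _ _).trans (image_subset_range _ _)
  have hpre : IsPreconnected (f ⁻¹' C) := by
    rw [← hf.isInducing.isPreconnected_image, image_preimage_eq_of_subset hCrange]
    exact isPreconnected_connectedComponentIn
  have hsub : f ⁻¹' C ⊆ connectedComponentIn s x :=
    hpre.subset_connectedComponentIn (mem_connectedComponentIn (mem_image_of_mem f hx))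
      fun y hy => hf.injective.mem_set_image.1 (connectedComponentIn_subset _ _ hy)
  calc C = f '' (f ⁻¹' C) := (image_preimage_eq_of_subset hCrange).symm
    _ ⊆ _ := image_mono hsub

section Fragments

lemma subset_of_mem_cutFragments {S X F : Set R3} (hF : F ∈ cutFragments S X) : F ⊆ S \ X := by
  obtain ⟨p, -, rfl⟩ := hF
  exact connectedComponentIn_subset _ _

lemma cutFragments_eq_empty_of_subset {S X : Set R3} (h : S ⊆ X) : cutFragments S X = ∅ := by
  simp [cutFragments, sdiff_eq_empty.2 h]

lemma cutFragments_range {α : Type*} [TopologicalSpace α] {φ : α → R3} (hφ : IsEmbedding φ)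
    (X : Set R3) :
    cutFragments (range φ) X = image φ '' (connectedComponentIn (φ ⁻¹' X)ᶜ '' (φ ⁻¹' X)ᶜ) := by
  simp only [cutFragments, ← image_compl_preimage]
  ext F
  constructor
  · rintro ⟨_, ⟨t, ht, rfl⟩, rfl⟩
    exact ⟨_, ⟨t, ht, rfl⟩, hφ.image_connectedComponentIn ht⟩
  · rintro ⟨_, ⟨t, ht, rfl⟩, rfl⟩
    exact ⟨φ t, ⟨t, ht, rfl⟩, hφ.image_connectedComponentIn ht⟩

lemma lineOf_eq_range (ℓ : R3 × R3) : lineOf ℓ = range fun c : ℝ => ℓ.1 + c • ℓ.2 := by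
  ext p
  simp [lineOf, eq_comm]

lemma encard_cutFragments_lineOf_le {ℓ : R3 × R3} (hℓ : ℓ.2 ≠ 0) {X : Set R3}
    (hX : (lineOf ℓ ∩ X).Finite) :
    (cutFragments (lineOf ℓ) X).encard ≤ (lineOf ℓ ∩ X).encard + 1 := by
  set φ : ℝ → R3 := fun c => ℓ.1 + c • ℓ.2
  have hφ : IsEmbedding φ :=
    (Homeomorph.addLeft ℓ.1).isEmbedding.comp (isClosedEmbedding_smul_left hℓ).isEmbedding
  have hT : (φ ⁻¹' X).encard = (lineOf ℓ ∩ X).encard := by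
    rw [lineOf_eq_range, ← image_preimage_eq_range_inter, hφ.injective.encard_image]
  have hTfin : (φ ⁻¹' X).Finite := by
    rw [← encard_ne_top_iff, hT, encard_ne_top_iff]
    exact hX
  rw [lineOf_eq_range, cutFragments_range hφ, (image_injective.2 hφ.injective).encard_image,
    ← lineOf_eq_range, ← hT]
  exact encard_connectedComponentIn_compl_le hTfin.isClosed

end Fragments

section PlaneLines

variable {K V : Type*} [Field K] [AddCommGroup V] [Module K V]

lemma range_add_smul_eq_of_ne {a v : V} {s t : K} (hst : s ≠ t) :
    (range fun c : K => a + c • v) =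
      range fun c : K => (a + s • v) + c • ((a + t • v) - (a + s • v)) := by
  have hts : t - s ≠ 0 := sub_ne_zero.2 hst.symm
  ext z
  constructor
  · rintro ⟨c, rfl⟩
    refine ⟨(c - s) / (t - s), ?_⟩
    match_scalars <;> field_simp <;> ring
  · rintro ⟨c, rfl⟩
    refine ⟨s + c * (t - s), ?_⟩
    match_scalars <;> ring

lemma range_add_smul_eq_of_mem {a v b w p q : V} (hpq : p ≠ q)
    (hp : p ∈ range fun c : K => a + c • v) (hq : q ∈ range fun c : K => a + c • v)
    (hp' : p ∈ range fun c : K => b + c • w) (hq' : q ∈ range fun c : K => b + c • w) :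
    (range fun c : K => a + c • v) = range fun c : K => b + c • w := by
  obtain ⟨s, rfl⟩ := hp
  obtain ⟨t, rfl⟩ := hq
  obtain ⟨s', hs'⟩ := hp'
  obtain ⟨t', ht'⟩ := hq'
  have hst : s ≠ t := by rintro rfl; exact hpq rfl
  have hst' : s' ≠ t' := by rintro rfl; exact hpq (hs'.symm.trans ht')
  beta_reduce at hs' ht'
  rw [range_add_smul_eq_of_ne (a := a) (v := v) hst,
    range_add_smul_eq_of_ne (a := b) (v := w) hst', hs', ht']

end PlaneLines

lemma vproj_image_lineOf (ℓ : R3 × R3) :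
    vproj '' lineOf ℓ = range fun c : ℝ => vproj ℓ.1 + c • vproj ℓ.2 := by
  rw [lineOf_eq_range, ← range_comp]
  rfl

lemma vproj_image_lineOf_eq_of_mem {ℓ₁ ℓ₂ : R3 × R3} {u v : R2} (huv : u ≠ v)
    (hu₁ : u ∈ vproj '' lineOf ℓ₁) (hv₁ : v ∈ vproj '' lineOf ℓ₁)
    (hu₂ : u ∈ vproj '' lineOf ℓ₂) (hv₂ : v ∈ vproj '' lineOf ℓ₂) :
    vproj '' lineOf ℓ₁ = vproj '' lineOf ℓ₂ := by
  simp only [vproj_image_lineOf] at *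
  exact range_add_smul_eq_of_mem huv hu₁ hv₁ hu₂ hv₂

section Crossings

/-- The cut set `X` of the theorem. -/
def crossingPoints (L : Finset (R3 × R3)) : Set R3 :=
  {p | (∃ ℓ ∈ L, p ∈ lineOf ℓ) ∧ ∃ ℓ₁ ∈ L, ∃ ℓ₂ ∈ L, lineOf ℓ₁ ≠ lineOf ℓ₂ ∧
    vproj p ∈ vproj '' lineOf ℓ₁ ∧ vproj p ∈ vproj '' lineOf ℓ₂}

variable {L : Finset (R3 × R3)} {ℓ : R3 × R3}

lemma eq_of_vproj_eq_of_notMem_crossingPoints {ℓ' : R3 × R3} (hℓ : ℓ ∈ L) (hℓ' : ℓ' ∈ L)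
    (hNV : NonVertical (lineOf ℓ)) {p q : R3} (hp : p ∈ lineOf ℓ \ crossingPoints L)
    (hq : q ∈ lineOf ℓ') (hpq : vproj p = vproj q) : p = q := by
  by_cases hll : lineOf ℓ = lineOf ℓ'
  · exact hNV p hp.1 q (hll ▸ hq) hpq
  · exact absurd ⟨⟨ℓ, hℓ, hp.1⟩, ℓ, hℓ, ℓ', hℓ', hll, mem_image_of_mem _ hp.1, q, hq, hpq.symm⟩
      hp.2

lemma not_below_of_mem_cutFragments {ℓ' : R3 × R3} (hℓ : ℓ ∈ L) (hℓ' : ℓ' ∈ L)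
    (hNV : NonVertical (lineOf ℓ)) {A B : Set R3}
    (hA : A ∈ cutFragments (lineOf ℓ) (crossingPoints L))
    (hB : B ∈ cutFragments (lineOf ℓ') (crossingPoints L)) : ¬ Below A B := by
  rintro ⟨p, hp, q, hq, hpq, hz⟩
  have hpq' : p = q := eq_of_vproj_eq_of_notMem_crossingPoints hℓ hℓ' hNV
    (subset_of_mem_cutFragments hA hp) (subset_of_mem_cutFragments hB hq).1 hpq
  exact hz.ne (congrArg zcoord hpq')

lemma lineOf_subset_crossingPoints {ℓ₁ ℓ₂ : R3 × R3} (hℓ : ℓ ∈ L) (h₁ : ℓ₁ ∈ L) (h₂ : ℓ₂ ∈ L)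
    (hne : lineOf ℓ₁ ≠ lineOf ℓ₂) (hP₁ : vproj '' lineOf ℓ₁ = vproj '' lineOf ℓ)
    (hP₂ : vproj '' lineOf ℓ₂ = vproj '' lineOf ℓ) : lineOf ℓ ⊆ crossingPoints L :=
  fun _ hp => ⟨⟨ℓ, hℓ, hp⟩, ℓ₁, h₁, ℓ₂, h₂, hne, hP₁ ▸ mem_image_of_mem _ hp,
    hP₂ ▸ mem_image_of_mem _ hp⟩

variable (L ℓ) in
/-- The vertical plane over `ℓ` contains two distinct lines of `L`, so all of `ℓ` is cut away. -/
def IsStacked : Prop :=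
  ∃ ℓ₁ ∈ L, ∃ ℓ₂ ∈ L, lineOf ℓ₁ ≠ lineOf ℓ₂ ∧
    vproj '' lineOf ℓ₁ = vproj '' lineOf ℓ ∧ vproj '' lineOf ℓ₂ = vproj '' lineOf ℓ

lemma exists_crossing_line (hstack : ¬ IsStacked L ℓ) {p : R3} (hp : p ∈ crossingPoints L) :
    ∃ ℓ' ∈ L, vproj '' lineOf ℓ' ≠ vproj '' lineOf ℓ ∧ vproj p ∈ vproj '' lineOf ℓ' := by
  obtain ⟨-, ℓ₁, h₁, ℓ₂, h₂, hne, hp₁, hp₂⟩ := hp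
  by_cases hP₁ : vproj '' lineOf ℓ₁ = vproj '' lineOf ℓ
  · exact ⟨ℓ₂, h₂, fun hP₂ => hstack ⟨ℓ₁, h₁, ℓ₂, h₂, hne, hP₁, hP₂⟩, hp₂⟩
  · exact ⟨ℓ₁, h₁, hP₁, hp₁⟩

/-- Each crossing point on `ℓ` is charged to a line whose projection meets that of `ℓ` there;
two distinct projected lines meet at most once, so the charge is injective. -/
lemma encard_lineOf_inter_crossingPoints_add_one_le (hℓ : ℓ ∈ L) (hNV : NonVertical (lineOf ℓ))
    (hstack : ¬ IsStacked L ℓ) : (lineOf ℓ ∩ crossingPoints L).encard + 1 ≤ L.card := by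
  choose! g hgL hgne hgmem using
    fun p (hp : p ∈ lineOf ℓ ∩ crossingPoints L) => exists_crossing_line hstack hp.2
  have hmaps : MapsTo g (lineOf ℓ ∩ crossingPoints L) (L.erase ℓ : Set (R3 × R3)) :=
    fun p hp => Finset.mem_erase.2 ⟨fun h => hgne p hp (by rw [h]), hgL p hp⟩
  have hinj : InjOn g (lineOf ℓ ∩ crossingPoints L) := by
    intro p hp q hq hgpq
    by_contra hne
    have huv : vproj p ≠ vproj q := fun h => hne (hNV p hp.1 q hq.1 h)
    exact hgne p hp (vproj_image_lineOf_eq_of_mem huv (hgmem p hp) (hgpq ▸ hgmem q hq)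
      (mem_image_of_mem _ hp.1) (mem_image_of_mem _ hq.1))
  calc _ ≤ (L.erase ℓ : Set (R3 × R3)).encard + 1 := by
        gcongr
        exact encard_le_encard_of_injOn hmaps hinj
    _ = L.card := by
        rw [encard_coe_eq_coe_finsetCard, Finset.card_erase_of_mem hℓ]
        norm_cast
        have := Finset.card_pos.2 ⟨ℓ, hℓ⟩
        omega

lemma ncard_cutFragments_le (hℓ : ℓ ∈ L) (hdir : ℓ.2 ≠ 0) (hNV : NonVertical (lineOf ℓ)) :
    (cutFragments (lineOf ℓ) (crossingPoints L)).ncard ≤ L.card := by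
  by_cases hstack : IsStacked L ℓ
  · obtain ⟨ℓ₁, h₁, ℓ₂, h₂, hne, hP₁, hP₂⟩ := hstack
    rw [cutFragments_eq_empty_of_subset (lineOf_subset_crossingPoints hℓ h₁ h₂ hne hP₁ hP₂)]
    simp
  · have hcount := encard_lineOf_inter_crossingPoints_add_one_le hℓ hNV hstack
    have hfin := finite_of_encard_le_coe (le_self_add.trans hcount)
    exact (encard_le_coe_iff_finite_ncard_le.1
      ((encard_cutFragments_lineOf_le hdir hfin).trans hcount)).2

end Crossings

theorem stmt_12_general
    (n : ℕ) (L : Finset (R3 × R3)) (hcard : L.card = n)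
    (hdir : ∀ ℓ ∈ L, ℓ.2 ≠ 0)
    (hNV : ∀ ℓ ∈ L, NonVertical (lineOf ℓ))
    (X : Set R3)
    (hX : X = {p : R3 | (∃ ℓ ∈ L, p ∈ lineOf ℓ) ∧
      ∃ ℓ₁ ∈ L, ∃ ℓ₂ ∈ L, lineOf ℓ₁ ≠ lineOf ℓ₂ ∧
        vproj p ∈ vproj '' lineOf ℓ₁ ∧ vproj p ∈ vproj '' lineOf ℓ₂}) :
    HasDepthOrder (⋃ ℓ ∈ L, cutFragments (lineOf ℓ) X) ∧
    (⋃ ℓ ∈ L, cutFragments (lineOf ℓ) X).ncard ≤ n ^ 2 := by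
  obtain rfl : X = crossingPoints L := hX
  subst hcard
  refine ⟨⟨fun _ => 0, ?_⟩, ?_⟩
  · simp only [mem_iUnion]
    rintro A ⟨ℓ, hℓ, hA⟩ B ⟨ℓ', hℓ', hB⟩ hAB
    exact absurd hAB (not_below_of_mem_cutFragments hℓ hℓ' (hNV ℓ hℓ) hA hB)
  · calc _ ≤ ∑ ℓ ∈ L, (cutFragments (lineOf ℓ) (crossingPoints L)).ncard :=
          L.set_ncard_biUnion_le _
      _ ≤ ∑ _ℓ ∈ L, L.card :=
          Finset.sum_le_sum fun ℓ hℓ => ncard_cutFragments_le hℓ (hdir ℓ hℓ) (hNV ℓ hℓ)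
      _ = L.card ^ 2 := by simp [sq]

/-- the trivial quadratic bound for lines. Cutting each of `n`
pairwise disjoint non-vertical lines at every point whose projection is an
intersection point of the projections of two distinct lines of the family yields
at most `n²` fragments, and these fragments admit a depth order. -/
theorem stmt_12
    (n : ℕ) (L : Finset (R3 × R3)) (hcard : L.card = n)
    (hdir : ∀ ℓ ∈ L, ℓ.2 ≠ 0)
    (hNV : ∀ ℓ ∈ L, NonVertical (lineOf ℓ))
    (hdisj : ∀ ℓ ∈ L, ∀ ℓ' ∈ L, ℓ ≠ ℓ' → Disjoint (lineOf ℓ) (lineOf ℓ'))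
    (X : Set R3)
    (hX : X = {p : R3 | (∃ ℓ ∈ L, p ∈ lineOf ℓ) ∧
      ∃ ℓ₁ ∈ L, ∃ ℓ₂ ∈ L, lineOf ℓ₁ ≠ lineOf ℓ₂ ∧
        vproj p ∈ vproj '' lineOf ℓ₁ ∧ vproj p ∈ vproj '' lineOf ℓ₂}) :
    HasDepthOrder (⋃ ℓ ∈ L, cutFragments (lineOf ℓ) X) ∧
    (⋃ ℓ ∈ L, cutFragments (lineOf ℓ) X).ncard ≤ n ^ 2 :=
  stmt_12_general n L hcard hdir hNV X hX
end
end
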